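/- In the design setup, assume Q₊ᵀQ₊ and Q₊ᵀD₊Q₊ are invertible. (i) If the identity (Q₊ᵀQ₊)⁻¹(Q₊ᵀD₊⁻¹Q₊)(Q₊ᵀQ₊)⁻¹ = (Q₊ᵀD₊Q₊)⁻¹ does NOT hold, then tr[(Q₊ᵀQ₊)⁻¹(Q₊ᵀD₊⁻¹Q₊)(Q₊ᵀQ₊)⁻¹] > tr[(Q₊ᵀD₊Q₊)⁻¹], i.e., I₀(ξ,P₀) > I₀(ξ,I_n). (ii) If λmax[(Q₊ᵀD₊Q₊)⁻¹(Q₊ᵀD₊²Q₊)(Q₊ᵀD₊Q₊)⁻¹] ≠ λmax[(Q₊ᵀQ₊)⁻¹], then λmax[(Q₊ᵀD₊Q₊)⁻¹(Q₊ᵀD₊²Q₊)(Q₊ᵀD₊Q₊)⁻¹] > λmax[(Q₊ᵀQ₊)⁻¹], i.e., I₁(ξ,I_n) > I₁(ξ,P₀). -/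

import Mathlib

/-!
Both inequalities are instances of the Gauss–Markov (Aitken) inequality. For Hermitian `G`,
positive definite `H` and `B = QᴴGQ`, `C = QᴴHQ` invertible,
`B⁻¹(QᴴGH⁻¹GQ)B⁻¹ - C⁻¹ = ZᴴHZ` with `Z = H⁻¹GQB⁻¹ - QC⁻¹`, which is positive semidefinite.
Part (i) is the case `(G, H) = (1, D₊)`, part (ii) the case `(G, H) = (D₊, 1)`; `D₊ = J₊ᵀJ₊` is
positive definite because every column of `J₊` is picked out by a row that is a unit vector.
A nonzero positive semidefinite matrix has positive trace, and `λmax` is monotone in the Loewner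
order because `A ≤ B ≤ λmax(B) • 1`.
-/

open Matrix

/-- The largest eigenvalue of a real square matrix (for the symmetric matrices
considered here the set of eigenvalues is finite and nonempty, and `sSup`
yields its maximum). -/
noncomputable def lmax {m : ℕ} (A : Matrix (Fin m) (Fin m) ℝ) : ℝ :=
  sSup {r : ℝ | ∃ v : Fin m → ℝ, v ≠ 0 ∧ A.mulVec v = r • v}

namespace Matrix

section GaussMarkov

variable {R : Type*} {ι κ : Type*} [Fintype ι] [DecidableEq ι] [Fintype κ] [DecidableEq κ]

theorem gaussMarkov_gap_eq [CommRing R] [StarRing R] (Q : Matrix ι κ R) {G H : Matrix ι ι R}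
    (hG : G.IsHermitian) (hH : H.IsHermitian) (hHu : IsUnit H.det)
    (hB : IsUnit (Qᴴ * G * Q).det) (hC : IsUnit (Qᴴ * H * Q).det) :
    (Qᴴ * G * Q)⁻¹ * (Qᴴ * (G * H⁻¹ * G) * Q) * (Qᴴ * G * Q)⁻¹ - (Qᴴ * H * Q)⁻¹ =
      (H⁻¹ * G * Q * (Qᴴ * G * Q)⁻¹ - Q * (Qᴴ * H * Q)⁻¹)ᴴ * H *
        (H⁻¹ * G * Q * (Qᴴ * G * Q)⁻¹ - Q * (Qᴴ * H * Q)⁻¹) := by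
  simp only [conjTranspose_sub, conjTranspose_mul, hG.eq, hH.inv.eq,
    (isHermitian_conjTranspose_mul_mul Q hG).inv.eq, (isHermitian_conjTranspose_mul_mul Q hH).inv.eq]
  simp only [Matrix.mul_assoc] at hB hC ⊢
  have hBX : ∀ X : Matrix κ κ R, (Qᴴ * (G * Q))⁻¹ * (Qᴴ * (G * (Q * X))) = X := fun X => by
    simpa only [Matrix.mul_assoc] using nonsing_inv_mul_cancel_left _ X hB
  have hBB : Qᴴ * (G * (Q * (Qᴴ * (G * Q))⁻¹)) = 1 := by
    simpa only [Matrix.mul_assoc] using mul_nonsing_inv _ hB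
  have hCC : Qᴴ * (H * (Q * (Qᴴ * (H * Q))⁻¹)) = 1 := by
    simpa only [Matrix.mul_assoc] using mul_nonsing_inv _ hC
  simp only [Matrix.sub_mul, Matrix.mul_sub, Matrix.mul_assoc, mul_nonsing_inv_cancel_left _ _ hHu,
    nonsing_inv_mul_cancel_left _ _ hHu, hBX, hBB, hCC, Matrix.mul_one]
  abel

theorem gaussMarkov_gap_posSemidef [Field R] [PartialOrder R] [StarRing R] (Q : Matrix ι κ R)
    {G H : Matrix ι ι R} (hG : G.IsHermitian) (hH : H.PosDef)
    (hB : IsUnit (Qᴴ * G * Q).det) (hC : IsUnit (Qᴴ * H * Q).det) :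
    ((Qᴴ * G * Q)⁻¹ * (Qᴴ * (G * H⁻¹ * G) * Q) * (Qᴴ * G * Q)⁻¹ - (Qᴴ * H * Q)⁻¹).PosSemidef := by
  rw [gaussMarkov_gap_eq Q hG hH.isHermitian ((isUnit_iff_isUnit_det H).1 hH.isUnit) hB hC]
  exact hH.posSemidef.conjTranspose_mul_mul_same _

end GaussMarkov

open scoped ComplexOrder in
theorem PosSemidef.trace_pos_of_ne_zero {𝕜 n : Type*} [RCLike 𝕜] [Fintype n] {A : Matrix n n 𝕜}
    (hA : A.PosSemidef) (h : A ≠ 0) : 0 < A.trace :=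
  hA.trace_nonneg.lt_of_ne' (mt hA.trace_eq_zero_iff.1 h)

theorem mulVec_injective_of_forall_exists_row_eq_single {R ι κ : Type*} [Semiring R] [Fintype κ]
    [DecidableEq κ] {M : Matrix ι κ R} (hM : ∀ k, ∃ i, M i = Pi.single k 1) :
    Function.Injective M.mulVec := by
  intro v w hvw
  funext k
  obtain ⟨i, hi⟩ := hM k
  simpa only [mulVec, hi, single_one_dotProduct] using congrFun hvw i

theorem exists_submatrix_row_eq_single {R ι κ ν : Type*} [Semiring R] [Nontrivial R]
    [DecidableEq κ] [DecidableEq ν] {J : Matrix ι ν R}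
    (hJ : ∀ i, ∃ j₀, ∀ j, J i j = if j = j₀ then (1 : R) else 0) {e : κ ↪ ν}
    (hpos : ∀ k, ∃ i, J i (e k) = 1) (k : κ) : ∃ i, J.submatrix id e i = Pi.single k 1 := by
  obtain ⟨i, hi⟩ := hpos k
  obtain ⟨j₀, hj₀⟩ := hJ i
  obtain rfl : e k = j₀ := by
    by_contra hne
    simp [hj₀, hne] at hi
  refine ⟨i, funext fun l => ?_⟩
  simp [hj₀, Pi.single_apply, e.injective.eq_iff]

end Matrix

section lmax

open scoped MatrixOrder

variable {m : ℕ}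

theorem lmax_eq_sSup_spectrum (A : Matrix (Fin m) (Fin m) ℝ) : lmax A = sSup (spectrum ℝ A) := by
  rw [lmax, ← spectrum_toLin']
  congr 1
  ext r
  simp only [← Module.End.hasEigenvalue_iff_mem_spectrum, Module.End.hasEigenvalue_iff,
    Submodule.ne_bot_iff, Module.End.mem_eigenspace_iff, toLin'_apply, Set.mem_ofPred_eq]
  exact exists_congr fun _ => and_comm

theorem lmax_le_lmax {A B : Matrix (Fin m) (Fin m) ℝ} (hA : A.IsHermitian) (hAB : A ≤ B) :
    lmax A ≤ lmax B := by
  rcases isEmpty_or_nonempty (Fin m) with _ | _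
  · rw [Subsingleton.elim A B]
  have hB : B.IsHermitian := by simpa using hA.add (le_iff.1 hAB).isHermitian
  have hA_spec : (spectrum ℝ A).Nonempty := by
    simp [hA.spectrum_real_eq_range_eigenvalues, Set.range_nonempty]
  rw [lmax_eq_sSup_spectrum, lmax_eq_sSup_spectrum]
  have hBle : B ≤ algebraMap ℝ _ (sSup (spectrum ℝ B)) :=
    (le_algebraMap_iff_spectrum_le hB.isSelfAdjoint).2 fun x hx =>
      le_csSup (finite_real_spectrum (A := B)).bddAbove hx
  exact csSup_le hA_spec <| (le_algebraMap_iff_spectrum_le hA.isSelfAdjoint).1 (hAB.trans hBle)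

end lmax

theorem strict_loss_comparisons_general (N n p q : ℕ)
    (J : Matrix (Fin n) (Fin N) ℝ)
    (hJ : ∀ i, ∃ j₀, ∀ j, J i j = if j = j₀ then (1 : ℝ) else 0)
    (e : Fin q ↪ Fin N)
    (hpos : ∀ k, ∃ i, J i (e k) = 1)
    (Jp : Matrix (Fin n) (Fin q) ℝ) (hJp : ∀ i k, Jp i k = J i (e k))
    (Qp : Matrix (Fin q) (Fin p) ℝ)
    (Dp : Matrix (Fin q) (Fin q) ℝ) (hDp : Dp = Jpᵀ * Jp)
    (hQpQp : IsUnit (Qpᵀ * Qp).det)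
    (hQpDQp : IsUnit (Qpᵀ * Dp * Qp).det) :
    (¬((Qpᵀ * Qp)⁻¹ * (Qpᵀ * Dp⁻¹ * Qp) * (Qpᵀ * Qp)⁻¹ = (Qpᵀ * Dp * Qp)⁻¹) →
      Matrix.trace ((Qpᵀ * Dp * Qp)⁻¹)
        < Matrix.trace ((Qpᵀ * Qp)⁻¹ * (Qpᵀ * Dp⁻¹ * Qp) * (Qpᵀ * Qp)⁻¹)) ∧
    (lmax ((Qpᵀ * Dp * Qp)⁻¹ * (Qpᵀ * (Dp * Dp) * Qp) * (Qpᵀ * Dp * Qp)⁻¹)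
        ≠ lmax ((Qpᵀ * Qp)⁻¹) →
      lmax ((Qpᵀ * Qp)⁻¹)
        < lmax ((Qpᵀ * Dp * Qp)⁻¹ * (Qpᵀ * (Dp * Dp) * Qp) * (Qpᵀ * Dp * Qp)⁻¹)) := by
  have hD : Dp.PosDef := by
    obtain rfl : Jp = J.submatrix id e := Matrix.ext hJp
    rw [hDp, ← conjTranspose_eq_transpose_of_trivial]
    exact .conjTranspose_mul_self _ <|
      mulVec_injective_of_forall_exists_row_eq_single (exists_submatrix_row_eq_single hJ hpos)
  rw [← conjTranspose_eq_transpose_of_trivial Qp] at hQpQp hQpDQp ⊢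
  refine ⟨fun hne => ?_, fun hne => ?_⟩
  · have hgap := gaussMarkov_gap_posSemidef Qp isHermitian_one hD (by simpa using hQpQp) hQpDQp
    simp only [Matrix.mul_one, Matrix.one_mul] at hgap
    have htr := hgap.trace_pos_of_ne_zero (sub_ne_zero.2 hne)
    rw [trace_sub] at htr
    linarith
  · have hgap := gaussMarkov_gap_posSemidef Qp hD.isHermitian .one hQpDQp (by simpa using hQpQp)
    simp only [inv_one, Matrix.mul_one] at hgap
    exact (lmax_le_lmax (isHermitian_conjTranspose_mul_self Qp).inv (le_iff.2 hgap)).lt_of_ne' hne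

/-- In the design setup: (i) if the identity
`(Q₊ᵀQ₊)⁻¹(Q₊ᵀD₊⁻¹Q₊)(Q₊ᵀQ₊)⁻¹ = (Q₊ᵀD₊Q₊)⁻¹` fails, then
`I₀(ξ,P₀) > I₀(ξ,Iₙ)`; (ii) if
`λmax[(Q₊ᵀD₊Q₊)⁻¹(Q₊ᵀD₊²Q₊)(Q₊ᵀD₊Q₊)⁻¹] ≠ λmax[(Q₊ᵀQ₊)⁻¹]`, then
`I₁(ξ,Iₙ) > I₁(ξ,P₀)`. -/
theorem strict_loss_comparisons (N n p q : ℕ) (hp : 0 < p) (hpq : p ≤ q)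
    (hqn : q ≤ n) (hqN : q ≤ N)
    (Q : Matrix (Fin N) (Fin p) ℝ) (hQ : Qᵀ * Q = 1)
    (J : Matrix (Fin n) (Fin N) ℝ)
    (hJ : ∀ i, ∃ j₀, ∀ j, J i j = if j = j₀ then (1 : ℝ) else 0)
    (e : Fin q ↪ Fin N)
    (hsupp : ∀ j, j ∉ Set.range ⇑e → ∀ i, J i j = 0)
    (hpos : ∀ k, ∃ i, J i (e k) = 1)
    (Jp : Matrix (Fin n) (Fin q) ℝ) (hJp : ∀ i k, Jp i k = J i (e k))
    (Qp : Matrix (Fin q) (Fin p) ℝ) (hQp : ∀ k j, Qp k j = Q (e k) j)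
    (Dp : Matrix (Fin q) (Fin q) ℝ) (hDp : Dp = Jpᵀ * Jp)
    (hQpQp : IsUnit (Qpᵀ * Qp).det)
    (hQpDQp : IsUnit (Qpᵀ * Dp * Qp).det) :
    (¬((Qpᵀ * Qp)⁻¹ * (Qpᵀ * Dp⁻¹ * Qp) * (Qpᵀ * Qp)⁻¹ = (Qpᵀ * Dp * Qp)⁻¹) →
      Matrix.trace ((Qpᵀ * Dp * Qp)⁻¹)
        < Matrix.trace ((Qpᵀ * Qp)⁻¹ * (Qpᵀ * Dp⁻¹ * Qp) * (Qpᵀ * Qp)⁻¹)) ∧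
    (lmax ((Qpᵀ * Dp * Qp)⁻¹ * (Qpᵀ * (Dp * Dp) * Qp) * (Qpᵀ * Dp * Qp)⁻¹)
        ≠ lmax ((Qpᵀ * Qp)⁻¹) →
      lmax ((Qpᵀ * Qp)⁻¹)
        < lmax ((Qpᵀ * Dp * Qp)⁻¹ * (Qpᵀ * (Dp * Dp) * Qp) * (Qpᵀ * Dp * Qp)⁻¹)) :=
  strict_loss_comparisons_general N n p q J hJ e hpos Jp hJp Qp Dp hDp hQpQp hQpDQp
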